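/- arXiv:2406.16444 — 5 statements merged into one kernel-verified Lean document; each statement's English description precedes it below -/
import Mathlib

section
/- Let A be a binary, equireplicate r×c row-column design on v symbols with replication number e. (a) If r ≥ 2 and (2c − v)·(r − 1) = c·(e − 1) as an equation of integers, then every pair of distinct rows shares exactly 2c − v symbols, i.e. |R_i ∩ R_{i'}| = 2c − v for all i ≠ i' (property RR holds). (b) If c ≥ 2 and (2r − v)·(c − 1) = r·(e − 1) as an equation of integers, then every pair of distinct columns shares exactly 2r − v symbols, i.e. |C_j ∩ C_{j'}| = 2r − v for all j ≠ j' (property CC holds). -/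
/-!
Counting the incidences between row `i` and the other rows in two ways: each of the `c`
symbols of row `i` lies in `e - 1` further rows, so the `r - 1` intersection sizes
`|R_i ∩ R_k|` sum to `c (e - 1)`. Each of them is at least `|R_i| + |R_k| - v = 2c - v`, and
the hypothesis says that `c (e - 1)` is exactly `(r - 1)` times this lower bound, so every
intersection attains it. Columns are rows of the transposed design.
-/

open Finset

/-- A row-column design `A` is *binary* if each row map and each column map is injective. -/
def IsBinary {ρ γ σ : Type*} (A : ρ × γ → σ) : Prop :=
  (∀ i : ρ, Function.Injective fun j : γ => A (i, j)) ∧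
  (∀ j : γ, Function.Injective fun i : ρ => A (i, j))

/-- A row-column design `A` is *equireplicate* with replication number `e` if every
symbol occurs in exactly `e` cells. -/
def IsEquireplicate {ρ γ σ : Type*} [Fintype ρ] [Fintype γ] [DecidableEq σ]
    (A : ρ × γ → σ) (e : ℕ) : Prop :=
  ∀ x : σ, (Finset.univ.filter fun p : ρ × γ => A p = x).card = e

/-- The set of symbols occurring in row `i`. -/
def rowSet {ρ γ σ : Type*} [Fintype γ] [DecidableEq σ] (A : ρ × γ → σ) (i : ρ) : Finset σ :=
  Finset.image (fun j : γ => A (i, j)) Finset.univ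

/-- The set of symbols occurring in column `j`. -/
def colSet {ρ γ σ : Type*} [Fintype ρ] [DecidableEq σ] (A : ρ × γ → σ) (j : γ) : Finset σ :=
  Finset.image (fun i : ρ => A (i, j)) Finset.univ

theorem Finset.sum_card_inter_of_card_filter_mem_eq {ι α : Type*} [DecidableEq α]
    {t : Finset ι} {s : Finset α} {f : ι → Finset α} {n : ℕ}
    (h : ∀ a ∈ s, #{i ∈ t | a ∈ f i} = n) :
    ∑ i ∈ t, #(s ∩ f i) = #s * n :=
  calc ∑ i ∈ t, #(s ∩ f i) = ∑ a ∈ s, #{i ∈ t | a ∈ f i} := by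
        simp_rw [← filter_mem_eq_inter, card_filter]
        exact sum_comm
    _ = #s * n := by rw [sum_congr rfl h, sum_const, smul_eq_mul]

theorem Finset.card_add_card_sub_card_le_card_inter {α : Type*} [Fintype α] [DecidableEq α]
    (s t : Finset α) : (#s : ℤ) + #t - Fintype.card α ≤ #(s ∩ t) := by
  have hunion := card_inter_add_card_union s t
  have hle := card_le_univ (s ∪ t)
  omega

section RowColumnDesign

variable {ρ γ σ : Type*} [DecidableEq σ] {A : ρ × γ → σ}

theorem card_rowSet_of_injective [Fintype γ] {i : ρ}
    (hrow : Function.Injective fun j : γ => A (i, j)) :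
    #(rowSet A i) = Fintype.card γ := by
  rw [rowSet, card_image_of_injective _ hrow, card_univ]

theorem card_filter_mem_rowSet [Fintype ρ] [Fintype γ] {e : ℕ}
    (hrow : ∀ i : ρ, Function.Injective fun j : γ => A (i, j))
    (hrep : IsEquireplicate A e) (x : σ) :
    #{k : ρ | x ∈ rowSet A k} = e := by
  rw [← hrep x]
  refine (card_bij (fun p _ => p.1) ?_ ?_ ?_).symm
  · rintro ⟨k, j⟩ hp
    simp only [mem_filter, mem_univ, true_and, rowSet, mem_image] at hp ⊢
    exact ⟨j, hp⟩
  · rintro ⟨k, j⟩ hp ⟨k', j'⟩ hp' (rfl : k = k')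
    simp only [mem_filter, mem_univ, true_and] at hp hp'
    rw [hrow k (hp.trans hp'.symm)]
  · intro k hk
    simp only [mem_filter, mem_univ, true_and, rowSet, mem_image] at hk
    obtain ⟨j, hj⟩ := hk
    exact ⟨(k, j), by simpa using hj, rfl⟩

theorem sum_card_rowSet_inter [Fintype ρ] [Fintype γ] {e : ℕ}
    (hrow : ∀ i : ρ, Function.Injective fun j : γ => A (i, j))
    (hrep : IsEquireplicate A e) (i : ρ) :
    ∑ k, #(rowSet A i ∩ rowSet A k) = Fintype.card γ * e := by
  rw [sum_card_inter_of_card_filter_mem_eq fun x _ => card_filter_mem_rowSet hrow hrep x,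
    card_rowSet_of_injective (hrow i)]

theorem IsEquireplicate.comp_swap [Fintype ρ] [Fintype γ] {e : ℕ} (hrep : IsEquireplicate A e) :
    IsEquireplicate (A ∘ Prod.swap) e := by
  intro x
  rw [← hrep x]
  exact card_equiv (Equiv.prodComm γ ρ) (by simp)

theorem colSet_eq_rowSet_comp_swap [Fintype ρ] (j : γ) :
    colSet A j = rowSet (A ∘ Prod.swap) j :=
  rfl

theorem card_rowSet_inter_eq_of_mul_eq [Fintype ρ] [Fintype γ] [Fintype σ] [DecidableEq ρ]
    {e : ℕ} (hrow : ∀ i : ρ, Function.Injective fun j : γ => A (i, j))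
    (hrep : IsEquireplicate A e)
    (heq : (2 * (Fintype.card γ : ℤ) - Fintype.card σ) * ((Fintype.card ρ : ℤ) - 1)
        = (Fintype.card γ : ℤ) * ((e : ℤ) - 1))
    {i i' : ρ} (hne : i ≠ i') :
    (#(rowSet A i ∩ rowSet A i') : ℤ) = 2 * (Fintype.card γ : ℤ) - Fintype.card σ := by
  set m : ℤ := 2 * (Fintype.card γ : ℤ) - Fintype.card σ
  have hlow : ∀ k, m ≤ #(rowSet A i ∩ rowSet A k) := fun k => by
    have := card_add_card_sub_card_le_card_inter (rowSet A i) (rowSet A k)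
    rwa [card_rowSet_of_injective (hrow i), card_rowSet_of_injective (hrow k), ← two_mul] at this
  have hsum :
      ∑ k ∈ univ.erase i, m = ∑ k ∈ univ.erase i, (#(rowSet A i ∩ rowSet A k) : ℤ) := by
    have htotal := sum_card_rowSet_inter hrow hrep i
    rw [← add_sum_erase _ _ (mem_univ i), inter_self, card_rowSet_of_injective (hrow i)] at htotal
    rw [sum_const, card_erase_of_mem (mem_univ i), card_univ, nsmul_eq_mul,
      Nat.cast_pred (Fintype.card_pos_iff.2 ⟨i⟩), mul_comm, heq]
    zify at htotal
    linarith
  exact ((sum_eq_sum_iff_of_le fun k _ => hlow k).1 hsum i'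
    (mem_erase.2 ⟨hne.symm, mem_univ _⟩)).symm

end RowColumnDesign

/-- In a binary, equireplicate r×c row-column design on v symbols with
replication number e:
(a) if r ≥ 2 and (2c − v)·(r − 1) = c·(e − 1) in ℤ, then every pair of distinct rows
    shares exactly 2c − v symbols (property RR holds);
(b) if c ≥ 2 and (2r − v)·(c − 1) = r·(e − 1) in ℤ, then every pair of distinct columns
    shares exactly 2r − v symbols (property CC holds). -/
theorem stmt3 (r c v e : ℕ)
    (A : Fin r × Fin c → Fin v) (hbin : IsBinary A) (hrep : IsEquireplicate A e) :
    (2 ≤ r →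
      (2 * (c : ℤ) - v) * ((r : ℤ) - 1) = (c : ℤ) * ((e : ℤ) - 1) →
      ∀ i i' : Fin r, i ≠ i' →
        ((rowSet A i ∩ rowSet A i').card : ℤ) = 2 * (c : ℤ) - v) ∧
    (2 ≤ c →
      (2 * (r : ℤ) - v) * ((c : ℤ) - 1) = (r : ℤ) * ((e : ℤ) - 1) →
      ∀ j j' : Fin c, j ≠ j' →
        ((colSet A j ∩ colSet A j').card : ℤ) = 2 * (r : ℤ) - v) := by
  refine ⟨fun _ heq i i' hne => ?_, fun _ heq j j' hne => ?_⟩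
  · simpa using card_rowSet_inter_eq_of_mul_eq hbin.1 hrep (by simpa using heq) hne
  · rw [colSet_eq_rowSet_comp_swap, colSet_eq_rowSet_comp_swap]
    simpa using card_rowSet_inter_eq_of_mul_eq hbin.2 hrep.comp_swap (by simpa using heq) hne
end

section
/- Let S : Fin r × Fin c → Fin v_S be a binary, equireplicate row-column design with replication number e_S satisfying |R_i(S) ∩ C_j(S)| = λ_S for all row indices i and column indices j, and let T : Fin a × Fin b → Fin v_T be a binary, equireplicate row-column design with replication number e_T satisfying |R_p(T) ∩ C_q(T)| = λ_T for all row indices p and column indices q. Define A : (Fin r × Fin a) × (Fin c × Fin b) → Fin v_S × Fin v_T by A((i,p),(j,q)) = (S(i,j), T(p,q)). Then A is binary, A is equireplicate with replication number e_S·e_T, and |R_{(i,p)}(A) ∩ C_{(j,q)}(A)| = λ_S·λ_T for all row indices (i,p) and column indices (j,q); that is, A is an (ra)×(bc) AO-array on v_S·v_T symbols. -/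
open Finset

/-- If S is an r×c AO-array on v_S symbols (binary, equireplicate with
replication number e_S, all row-column intersections of size λ_S) and T is an a×b
AO-array on v_T symbols (replication number e_T, row-column intersections of size λ_T),
then the product array A((i,p),(j,q)) = (S(i,j), T(p,q)) is binary, equireplicate with
replication number e_S·e_T, and has all row-column intersections of size λ_S·λ_T;
that is, A is an (ra)×(bc) AO-array on v_S·v_T symbols. -/
theorem stmt6 (r c a b vS vT eS eT lamS lamT : ℕ)
    (S : Fin r × Fin c → Fin vS) (hSbin : IsBinary S) (hSrep : IsEquireplicate S eS)
    (hSrc : ∀ (i : Fin r) (j : Fin c), (rowSet S i ∩ colSet S j).card = lamS)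
    (T : Fin a × Fin b → Fin vT) (hTbin : IsBinary T) (hTrep : IsEquireplicate T eT)
    (hTrc : ∀ (p : Fin a) (q : Fin b), (rowSet T p ∩ colSet T q).card = lamT)
    (A : (Fin r × Fin a) × (Fin c × Fin b) → Fin vS × Fin vT)
    (hA : ∀ (i : Fin r) (p : Fin a) (j : Fin c) (q : Fin b),
      A ((i, p), (j, q)) = (S (i, j), T (p, q))) :
    IsBinary A ∧
    IsEquireplicate A (eS * eT) ∧
    (∀ (ip : Fin r × Fin a) (jq : Fin c × Fin b),
      (rowSet A ip ∩ colSet A jq).card = lamS * lamT) := by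
  have hrow : ∀ ip : Fin r × Fin a, rowSet A ip = (rowSet S ip.1) ×ˢ (rowSet T ip.2) := by
    rintro ⟨i, p⟩
    ext ⟨x, y⟩
    simp only [rowSet, mem_image, mem_univ, true_and, mem_product, Prod.exists]
    constructor
    · rintro ⟨j, q, h⟩
      rw [hA] at h
      exact ⟨⟨j, (Prod.ext_iff.mp h).1⟩, ⟨q, (Prod.ext_iff.mp h).2⟩⟩
    · rintro ⟨⟨j, hj⟩, ⟨q, hq⟩⟩
      exact ⟨j, q, by rw [hA, hj, hq]⟩
  have hcol : ∀ jq : Fin c × Fin b, colSet A jq = (colSet S jq.1) ×ˢ (colSet T jq.2) := by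
    rintro ⟨j, q⟩
    ext ⟨x, y⟩
    simp only [colSet, mem_image, mem_univ, true_and, mem_product, Prod.exists]
    constructor
    · rintro ⟨i, p, h⟩
      rw [hA] at h
      exact ⟨⟨i, (Prod.ext_iff.mp h).1⟩, ⟨p, (Prod.ext_iff.mp h).2⟩⟩
    · rintro ⟨⟨i, hi⟩, ⟨p, hp⟩⟩
      exact ⟨i, p, by rw [hA, hi, hp]⟩
  refine ⟨⟨?_, ?_⟩, ?_, ?_⟩
  · rintro ⟨i, p⟩ ⟨j, q⟩ ⟨j', q'⟩ h
    simp only [hA] at h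
    have h1 := (Prod.ext_iff.mp h).1
    have h2 := (Prod.ext_iff.mp h).2
    exact Prod.ext (hSbin.1 i h1) (hTbin.1 p h2)
  · rintro ⟨j, q⟩ ⟨i, p⟩ ⟨i', p'⟩ h
    simp only [hA] at h
    have h1 := (Prod.ext_iff.mp h).1
    have h2 := (Prod.ext_iff.mp h).2
    exact Prod.ext (hSbin.2 j h1) (hTbin.2 q h2)
  · rintro ⟨x, y⟩
    have : (univ.filter fun w : (Fin r × Fin a) × (Fin c × Fin b) => A w = (x, y)) =
        ((univ.filter fun u : Fin r × Fin c => S u = x) ×ˢ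
          (univ.filter fun u : Fin a × Fin b => T u = y)).image
          (fun w => ((w.1.1, w.2.1), (w.1.2, w.2.2))) := by
      ext ⟨⟨i, p⟩, ⟨j, q⟩⟩
      simp only [mem_filter, mem_image, mem_product, mem_univ, true_and]
      constructor
      · intro h
        rw [hA] at h
        exact ⟨((i, j), (p, q)), ⟨(Prod.ext_iff.mp h).1, (Prod.ext_iff.mp h).2⟩, rfl⟩
      · rintro ⟨⟨⟨i', j'⟩, ⟨p', q'⟩⟩, ⟨h1, h2⟩, h⟩
        obtain ⟨h3, h4⟩ := Prod.ext_iff.mp h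
        obtain ⟨rfl, rfl⟩ := Prod.ext_iff.mp h3
        obtain ⟨rfl, rfl⟩ := Prod.ext_iff.mp h4
        rw [hA, h1, h2]
    rw [this, card_image_of_injective, card_product, hSrep, hTrep]
    rintro ⟨⟨i, j⟩, ⟨p, q⟩⟩ ⟨⟨i', j'⟩, ⟨p', q'⟩⟩ h
    simp_all [Prod.ext_iff]
  · intro ip jq
    rw [hrow, hcol, product_inter_product, card_product, hSrc, hTrc]
end

section
/- Let v, r, c, e be positive integers with e·v = r·c, v > r and v > c (an admissible parameter set for a non-trivial AO-array). Then there exists a binary, equireplicate r×c row-column design A on v symbols with replication number e such that |R_i(A) ∩ C_j(A)| = e for every row index i and column index j; that is, an AO-array exists for every admissible parameter set. -/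
open Finset

lemma ceil_lt_iff {v : ℕ} (hv : 0 < v) (N i : ℕ) : i < (N + v - 1) / v ↔ i * v < N := by
  rw [Nat.lt_iff_add_one_le, Nat.le_div_iff_mul_le hv, add_mul, one_mul]
  generalize i * v = X
  omega

lemma mod_char {v : ℕ} (hv : 0 < v) (a F : ℕ) (ha : a < v) (hF : F < v) :
    (a + v - F) % v = if F ≤ a then a - F else a + v - F := by
  split
  · next h =>
    have h1 : a + v - F = (a - F) + v := by omega
    rw [h1, Nat.add_mod_right, Nat.mod_eq_of_lt (by omega)]
  · next h => exact Nat.mod_eq_of_lt (by omega)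

lemma mod_shift {v : ℕ} (hv : 0 < v) (b F : ℕ) (hF : F < v) :
    (b + v - F) % v = (b % v + v - F) % v := by
  obtain ⟨q, hq⟩ : ∃ q, b = v * q + b % v := ⟨b / v, (Nat.div_add_mod b v).symm⟩
  have h2 : b % v < v := Nat.mod_lt _ hv
  have h1 : b + v - F = v * q + (b % v + v - F) := by
    generalize b % v = m at *
    generalize v * q = W at *
    omega
  rw [h1, Nat.mul_add_mod]

lemma count_key {v r c e : ℕ} (hv : 0 < v) (hr : 0 < r) (hc : 0 < c)
    (hev : e * v = r * c) (hvr : r < v) (hvc : c < v) (b : ℕ) :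
    ((univ : Finset (Fin r)).filter fun i : Fin r => (b + v - (i : ℕ) * v / r) % v < c).card = e := by
  have hav : b % v < v := Nat.mod_lt _ hv
  have hfv : ∀ i : Fin r, (i : ℕ) * v / r < v := by
    intro i
    rw [Nat.div_lt_iff_lt_mul hr]
    calc (i : ℕ) * v < r * v := by
          exact Nat.mul_lt_mul_of_lt_of_le i.isLt le_rfl hv
      _ = v * r := mul_comm r v
  -- reduce to a := b % v
  set a := b % v with haa
  have hcong : ((univ : Finset (Fin r)).filter fun i : Fin r => (b + v - (i : ℕ) * v / r) % v < c)
      = (univ : Finset (Fin r)).filter fun i : Fin r => (a + v - (i : ℕ) * v / r) % v < c := by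
    apply filter_congr
    intro i _
    rw [mod_shift hv b _ (hfv i)]
  rw [hcong]
  clear hcong haa
  -- main counting
  set K : ℕ → ℕ := fun m => (m * r + v - 1) / v with hK
  have hiF : ∀ (m : ℕ) (i : Fin r), ((i : ℕ) < K m ↔ (i : ℕ) * v / r < m) := by
    intro m i
    rw [hK, ceil_lt_iff hv, Nat.div_lt_iff_lt_mul hr]
  have hKmono : ∀ {m m' : ℕ}, m ≤ m' → K m ≤ K m' := by
    intro m m' h
    exact Nat.div_le_div_right (by
      have := Nat.mul_le_mul_right r h
      omega)
  have hKadd : ∀ m, K (m + c) = K m + e := by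
    intro m
    have hcr : c * r = e * v := by rw [mul_comm]; exact hev.symm
    have h1 : (m + c) * r + v - 1 = (m * r + v - 1) + e * v := by
      have h2 : (m + c) * r = m * r + c * r := add_mul m c r
      generalize m * r = X at *
      omega
    show ((m + c) * r + v - 1) / v = (m * r + v - 1) / v + e
    rw [h1, Nat.add_mul_div_right _ _ hv]
  have hKler : ∀ m, m ≤ v → K m ≤ r := by
    intro m hm
    by_contra h
    push_neg at h
    rw [hK] at h
    rw [ceil_lt_iff hv] at h
    have h2 : m * r ≤ v * r := Nat.mul_le_mul_right r hm
    have h3 : r * v = v * r := mul_comm r v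
    generalize r * v = X at *
    generalize v * r = Y at *
    generalize m * r = Z at *
    omega
  have hKger : ∀ m, v ≤ m → r ≤ K m := by
    intro m hm
    rw [hK]
    rw [Nat.le_div_iff_mul_le hv]
    have h2 : v * r ≤ m * r := Nat.mul_le_mul_right r hm
    have h3 : r * v = v * r := mul_comm r v
    generalize r * v = X at *
    generalize v * r = Y at *
    generalize m * r = Z at *
    omega
  set K0 := K (a + 1 - c) with hK0
  set K1 := K (a + 1) with hK1
  set K2 := min (K (a + v + 1 - c)) r with hK2
  have hpt : ∀ i : Fin r,
      ((a + v - (i : ℕ) * v / r) % v < c ↔ ((K0 ≤ (i : ℕ) ∧ (i : ℕ) < K1) ∨ K2 ≤ (i : ℕ))) := by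
    intro i
    have hFv : (i : ℕ) * v / r < v := hfv i
    have e0 : K0 ≤ (i : ℕ) ↔ ¬ (i : ℕ) * v / r < a + 1 - c := by
      rw [← not_lt, hK0, hiF]
    have e1 : (i : ℕ) < K1 ↔ (i : ℕ) * v / r < a + 1 := by rw [hK1, hiF]
    have e2 : K2 ≤ (i : ℕ) ↔ ¬ (i : ℕ) * v / r < a + v + 1 - c := by
      rw [hK2]
      constructor
      · intro h
        rcases min_le_iff.mp h with h | h
        · rw [← not_lt, hiF] at h
          exact h
        · exact absurd h (not_le.mpr i.isLt)
      · intro h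
        apply min_le_iff.mpr
        left
        rw [← not_lt, hiF]
        exact h
    rw [mod_char hv a _ hav hFv, e0, e1, e2]
    generalize (i : ℕ) * v / r = F at *
    split
    · omega
    · omega
  have hcong2 : ((univ : Finset (Fin r)).filter fun i : Fin r => (a + v - (i : ℕ) * v / r) % v < c)
      = (univ : Finset (Fin r)).filter fun i : Fin r => ((K0 ≤ (i : ℕ) ∧ (i : ℕ) < K1) ∨ K2 ≤ (i : ℕ)) := by
    apply filter_congr
    intro i _
    exact hpt i
  rw [hcong2]
  have htrans : ((univ : Finset (Fin r)).filter fun i : Fin r => ((K0 ≤ (i : ℕ) ∧ (i : ℕ) < K1) ∨ K2 ≤ (i : ℕ))).card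
      = ((range r).filter fun n => ((K0 ≤ n ∧ n < K1) ∨ K2 ≤ n)).card := by
    rw [Finset.card_filter, Finset.card_filter]
    exact Fin.sum_univ_eq_sum_range (fun n => if (K0 ≤ n ∧ n < K1) ∨ K2 ≤ n then 1 else 0) r
  rw [htrans]
  have hK1r : K1 ≤ r := hKler _ (by omega)
  have hK01 : K0 ≤ K1 := hKmono (by omega)
  have hK2r : K2 ≤ r := min_le_right _ _
  have hK12 : K1 ≤ K2 := le_min (hKmono (by omega)) hK1r
  have hset : (range r).filter (fun n => (K0 ≤ n ∧ n < K1) ∨ K2 ≤ n) = Ico K0 K1 ∪ Ico K2 r := by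
    ext n
    simp only [mem_filter, mem_range, mem_union, mem_Ico]
    omega
  have hdisj : Disjoint (Ico K0 K1) (Ico K2 r) := by
    rw [Finset.disjoint_left]
    intro n hn hn'
    rw [mem_Ico] at hn hn'
    omega
  rw [hset, card_union_of_disjoint hdisj, Nat.card_Ico, Nat.card_Ico]
  rcases le_or_gt c (a + 1) with hca | hca
  · have h1 : K1 = K0 + e := by
      rw [hK1, hK0]
      have h2 := hKadd (a + 1 - c)
      have h3 : a + 1 - c + c = a + 1 := by omega
      rw [h3] at h2
      exact h2
    have h2 : r ≤ K (a + v + 1 - c) := hKger _ (by omega)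
    have h3 : K2 = r := by rw [hK2]; exact min_eq_right h2
    omega
  · have h00 : K 0 = 0 := by
      rw [hK]
      simp only [zero_mul, zero_add]
      exact Nat.div_eq_of_lt (by omega)
    have h0 : K0 = 0 := by
      rw [hK0]
      have h3 : a + 1 - c = 0 := by omega
      rw [h3, h00]
    have h2 : K (a + v + 1 - c) ≤ r := hKler _ (by omega)
    have h3 : K2 = K (a + v + 1 - c) := by rw [hK2]; exact min_eq_left h2
    have h4 : K (a + v + 1 - c) + e = K1 + r := by
      have h5 := hKadd (a + v + 1 - c)
      have h6 : a + v + 1 - c + c = (a + 1) + v := by omega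
      rw [h6] at h5
      have h8 : K ((a + 1) + v) = K (a + 1) + r := by
        show ((a + 1 + v) * r + v - 1) / v = ((a + 1) * r + v - 1) / v + r
        have h7 : ((a + 1) + v) * r + v - 1 = ((a + 1) * r + v - 1) + r * v := by
          have h9 : ((a + 1) + v) * r = (a + 1) * r + v * r := add_mul _ _ _
          have h10 : v * r = r * v := mul_comm v r
          generalize (a + 1) * r = X at *
          generalize v * r = Y at *
          generalize r * v = Z at *
          omega
        rw [h7, Nat.add_mul_div_right _ _ hv]
      rw [h8] at h5
      rw [hK1]
      omega
    have h9 : K1 ≤ e := by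
      have h10 : K1 ≤ K (0 + c) := by rw [hK1]; exact hKmono (by omega)
      rw [hKadd 0, h00] at h10
      omega
    omega

section Main
variable {v r c e : ℕ}

-- strict monotonicity of i ↦ i*v/r when r ≤ v
lemma fstrict (hr : 0 < r) (hrv : r ≤ v) {i1 i2 : ℕ} (h : i1 < i2) :
    i1 * v / r < i2 * v / r := by
  have h1 : i1 * v + v ≤ i2 * v := by
    have h2 : (i1 + 1) * v ≤ i2 * v := Nat.mul_le_mul_right v h
    have h3 : (i1 + 1) * v = i1 * v + v := by ring
    omega
  have h4 : i1 * v + r ≤ i1 * v + v := by omega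
  calc i1 * v / r < i1 * v / r + 1 := Nat.lt_succ_self _
    _ = (i1 * v + r) / r := (Nat.add_div_right _ hr).symm
    _ ≤ (i2 * v) / r := Nat.div_le_div_right (by omega)

end Main

/-- For every admissible parameter set for a non-trivial AO-array, i.e.
positive integers v, r, c, e with e·v = r·c, v > r and v > c, there exists a binary,
equireplicate r×c row-column design A on v symbols with replication number e all of
whose row-column intersections have size e (an AO-array). -/
theorem stmt8 (v r c e : ℕ) (hv : 0 < v) (hr : 0 < r) (hc : 0 < c) (he : 0 < e)
    (hev : e * v = r * c) (hvr : v > r) (hvc : v > c) :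
    ∃ A : Fin r × Fin c → Fin v,
      IsBinary A ∧ IsEquireplicate A e ∧
      ∀ (i : Fin r) (j : Fin c), (rowSet A i ∩ colSet A j).card = e := by
  have hrv : r ≤ v := le_of_lt hvr
  have hvr' : r < v := hvr
  have hvc' : c < v := hvc
  set A : Fin r × Fin c → Fin v :=
    fun p => ⟨((p.1 : ℕ) * v / r + (p.2 : ℕ)) % v, Nat.mod_lt _ hv⟩ with hA
  have hAval : ∀ (i : Fin r) (j : Fin c), (A (i, j)).val = ((i : ℕ) * v / r + (j : ℕ)) % v :=
    fun i j => rfl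
  have hfv : ∀ i : Fin r, (i : ℕ) * v / r < v := by
    intro i
    rw [Nat.div_lt_iff_lt_mul hr]
    calc (i : ℕ) * v < r * v := Nat.mul_lt_mul_of_lt_of_le i.isLt le_rfl hv
      _ = v * r := mul_comm r v
  have hcell : ∀ (i : Fin r) (j : Fin c) (x : Fin v),
      A (i, j) = x ↔ (j : ℕ) = (x.val + v - (i : ℕ) * v / r) % v := by
    intro i j x
    have hFv := hfv i
    have hjc := j.isLt
    have hxv := x.isLt
    constructor
    · intro h
      have hval : ((i : ℕ) * v / r + (j : ℕ)) % v = x.val := by rw [← hAval i j, h]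
      obtain ⟨q, hq⟩ : ∃ q, (i : ℕ) * v / r + (j : ℕ) = v * q + x.val :=
        ⟨((i : ℕ) * v / r + (j : ℕ)) / v, by rw [← hval]; exact (Nat.div_add_mod _ _).symm⟩
      have hq1 : q ≤ 1 := by
        by_contra hq2
        push_neg at hq2
        have h5 : v * 2 ≤ v * q := Nat.mul_le_mul_left v hq2
        generalize v * q = W at *
        omega
      rcases Nat.le_one_iff_eq_zero_or_eq_one.mp hq1 with rfl | rfl
      · rw [mul_zero, zero_add] at hq
        have h6 : x.val + v - (i : ℕ) * v / r = (j : ℕ) + v := by omega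
        rw [h6, Nat.add_mod_right, Nat.mod_eq_of_lt (by omega)]
      · rw [mul_one] at hq
        have h6 : x.val + v - (i : ℕ) * v / r = (j : ℕ) := by omega
        rw [h6, Nat.mod_eq_of_lt (by omega)]
    · intro h
      apply Fin.ext
      rw [hAval, h, Nat.add_mod_mod]
      have h7 : (i : ℕ) * v / r + (x.val + v - (i : ℕ) * v / r) = x.val + v := by omega
      rw [h7, Nat.add_mod_right, Nat.mod_eq_of_lt x.isLt]
  have hrowmem : ∀ (i : Fin r) (x : Fin v),
      x ∈ rowSet A i ↔ (x.val + v - (i : ℕ) * v / r) % v < c := by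
    intro i x
    simp only [rowSet, mem_image, mem_univ, true_and]
    constructor
    · rintro ⟨j, hj⟩
      have h1 := (hcell i j x).mp hj
      rw [← h1]
      exact j.isLt
    · intro ht
      exact ⟨⟨_, ht⟩, (hcell i ⟨_, ht⟩ x).mpr rfl⟩
  have hbin : IsBinary A := by
    constructor
    · intro i j1 j2 h
      have h1 := (hcell i j1 (A (i, j2))).mp h
      have h2 := (hcell i j2 (A (i, j2))).mp rfl
      exact Fin.ext (h1.trans h2.symm)
    · intro j i1 i2 h
      have h1 := (hcell i1 j (A (i2, j))).mp h
      have h2 := (hcell i2 j (A (i2, j))).mp rfl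
      have hFv1 := hfv i1
      have hFv2 := hfv i2
      have hxv := (A (i2, j)).isLt
      rw [mod_char hv _ _ hxv hFv1] at h1
      rw [mod_char hv _ _ hxv hFv2] at h2
      have hF : (i1 : ℕ) * v / r = (i2 : ℕ) * v / r := by
        generalize hg1 : (i1 : ℕ) * v / r = F1 at h1 hFv1 ⊢
        generalize hg2 : (i2 : ℕ) * v / r = F2 at h2 hFv2 ⊢
        split_ifs at h1 h2 <;> omega
      have hval : (i1 : ℕ) = (i2 : ℕ) := by
        rcases lt_trichotomy (i1 : ℕ) (i2 : ℕ) with hlt | heq | hgt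
        · exact absurd hF (Nat.ne_of_lt (fstrict hr hrv hlt))
        · exact heq
        · exact absurd hF.symm (Nat.ne_of_lt (fstrict hr hrv hgt))
      exact Fin.ext hval
  have hequi : IsEquireplicate A e := by
    intro x
    rw [Finset.card_filter, Fintype.sum_prod_type]
    have hinner : ∀ i : Fin r,
        (∑ j : Fin c, if A (i, j) = x then 1 else 0)
          = if (x.val + v - (i : ℕ) * v / r) % v < c then 1 else 0 := by
      intro i
      set t := (x.val + v - (i : ℕ) * v / r) % v with hT
      have step1 : (∑ j : Fin c, if A (i, j) = x then 1 else 0)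
          = ((univ.filter fun j : Fin c => (j : ℕ) = t).card) := by
        rw [Finset.card_filter]
        apply Finset.sum_congr rfl
        intro j _
        congr 1
        rw [eq_iff_iff]
        exact hcell i j x
      rw [step1]
      by_cases ht : t < c
      · rw [if_pos ht, Finset.card_eq_one]
        refine ⟨⟨t, ht⟩, ?_⟩
        ext j
        simp [Fin.ext_iff]
      · rw [if_neg ht, Finset.card_eq_zero, Finset.filter_eq_empty_iff]
        intro j _
        have := j.isLt
        omega
    rw [Finset.sum_congr rfl (fun i _ => hinner i), ← Finset.card_filter]
    exact count_key hv hr hc hev hvr' hvc' x.val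
  refine ⟨A, hbin, hequi, ?_⟩
  intro i j
  have hcolinj : Function.Injective fun i' : Fin r => A (i', j) := hbin.2 j
  have h1 : rowSet A i ∩ colSet A j
      = Finset.image (fun i' : Fin r => A (i', j))
          (univ.filter fun i' : Fin r => A (i', j) ∈ rowSet A i) := by
    ext s
    simp only [mem_inter, colSet, mem_image, mem_filter, mem_univ, true_and]
    constructor
    · rintro ⟨hR, i', rfl⟩
      exact ⟨i', hR, rfl⟩
    · rintro ⟨i', hR, rfl⟩
      exact ⟨hR, i', rfl⟩
  rw [h1, Finset.card_image_of_injective _ hcolinj]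
  obtain ⟨Fi, hFiv, hFieq⟩ : ∃ F0, F0 < v ∧ (i : ℕ) * v / r = F0 := ⟨_, hfv i, rfl⟩
  have hjc : (j : ℕ) < c := j.isLt
  have hpt : ∀ i' : Fin r, (A (i', j) ∈ rowSet A i) ↔
      (c + 2 * v - 1 - ((j : ℕ) + v - Fi) + v - (i' : ℕ) * v / r) % v < c := by
    intro i'
    rw [hrowmem, hAval, hFieq]
    obtain ⟨F, hFv, hFeq⟩ : ∃ F0, F0 < v ∧ (i' : ℕ) * v / r = F0 := ⟨_, hfv i', rfl⟩
    rw [hFeq]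
    obtain ⟨w, q, hwv, hq, hweq⟩ :
        ∃ w q, w < v ∧ F + (j : ℕ) = v * q + w ∧ (F + (j : ℕ)) % v = w :=
      ⟨_, _, Nat.mod_lt _ hv, (Nat.div_add_mod _ _).symm, rfl⟩
    rw [hweq]
    have stepA : (F + ((j : ℕ) + v - Fi)) % v = (w + v - Fi) % v := by
      have hstep : F + ((j : ℕ) + v - Fi) = v * q + (w + v - Fi) := by
        generalize v * q = W at hq ⊢
        omega
      rw [hstep, Nat.mul_add_mod]
    rw [← stepA]
    obtain ⟨s, hsv, hseq⟩ : ∃ s, s < v ∧ (F + ((j : ℕ) + v - Fi)) % v = s :=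
      ⟨_, Nat.mod_lt _ hv, rfl⟩
    obtain ⟨s', hs'v, hs'eq⟩ :
        ∃ s', s' < v ∧ (c + 2 * v - 1 - ((j : ℕ) + v - Fi) + v - F) % v = s' :=
      ⟨_, Nat.mod_lt _ hv, rfl⟩
    rw [hseq, hs'eq]
    have hsum : (s + s') % v =
        ((F + ((j : ℕ) + v - Fi)) + (c + 2 * v - 1 - ((j : ℕ) + v - Fi) + v - F)) % v := by
      rw [← hseq, ← hs'eq]
      exact Nat.ModEq.add (Nat.mod_modEq _ v) (Nat.mod_modEq _ v)
    have hX : (F + ((j : ℕ) + v - Fi)) + (c + 2 * v - 1 - ((j : ℕ) + v - Fi) + v - F)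
        = (c - 1) + 3 * v := by omega
    have hfinal : (s + s') % v = c - 1 := by
      rw [hsum, hX, Nat.add_mul_mod_self_right, Nat.mod_eq_of_lt (by omega)]
    obtain ⟨q2, hq2⟩ : ∃ q2, s + s' = v * q2 + (c - 1) :=
      ⟨(s + s') / v, by conv_lhs => rw [← Nat.div_add_mod (s + s') v, hfinal]⟩
    have hq2le : q2 ≤ 1 := by
      by_contra hgt
      push_neg at hgt
      have h5 : v * 2 ≤ v * q2 := Nat.mul_le_mul_left v hgt
      generalize v * q2 = W at h5 hq2
      omega
    rcases Nat.le_one_iff_eq_zero_or_eq_one.mp hq2le with rfl | rfl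
    · rw [mul_zero, zero_add] at hq2
      omega
    · rw [mul_one] at hq2
      omega
  have hcong : (univ.filter fun i' : Fin r => A (i', j) ∈ rowSet A i)
      = univ.filter fun i' : Fin r =>
        (c + 2 * v - 1 - ((j : ℕ) + v - Fi) + v - (i' : ℕ) * v / r) % v < c := by
    apply filter_congr
    intro i' _
    exact hpt i'
  rw [hcong]
  exact count_key hv hr hc hev hvr' hvc' (c + 2 * v - 1 - ((j : ℕ) + v - Fi))
end

section
/- For every positive integer k there exists a binary, equireplicate 2k×2k row-column design A on 4k symbols with replication number k such that |R_i(A) ∩ C_j(A)| = k for every row index i and column index j; that is, a (4k, k, −, −, k : 2k × 2k) AO-array exists for every positive integer k. -/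
open Finset

/-!
Index rows and columns by the group `G = ℤ/2k`, split the columns into two halves `j < k` and
`j ≥ k`, and put the symbol `(half of j, i + j)` in cell `(i, j)`. Each column then contains all
of `G` tagged with its own half, so a row meets a column exactly in the `k` cells of the row that
lie in the same half; likewise each symbol `(h, g)` occurs once in each of the `k` columns of
half `h`. Relabelling the `2 · 2k` symbols by `Fin (4k)` preserves all three properties.
-/

section Relabel

variable {ρ γ σ τ : Type*}

theorem IsBinary.comp {A : ρ × γ → σ} (hA : IsBinary A) {f : σ → τ}
    (hf : Function.Injective f) : IsBinary (f ∘ A) :=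
  ⟨fun i => hf.comp (hA.1 i), fun j => hf.comp (hA.2 j)⟩

theorem IsEquireplicate.comp_equiv [Fintype ρ] [Fintype γ] [DecidableEq σ] [DecidableEq τ]
    {A : ρ × γ → σ} {e : ℕ} (hA : IsEquireplicate A e) (f : σ ≃ τ) :
    IsEquireplicate (f ∘ A) e := fun x => by
  simpa only [Function.comp_apply, ← f.eq_symm_apply] using hA (f.symm x)

theorem card_rowSet_inter_colSet_comp [Fintype ρ] [Fintype γ] [DecidableEq σ] [DecidableEq τ]
    (A : ρ × γ → σ) {f : σ → τ} (hf : Function.Injective f) (i : ρ) (j : γ) :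
    #(rowSet (f ∘ A) i ∩ colSet (f ∘ A) j) = #(rowSet A i ∩ colSet A j) := by
  have hrow : rowSet (f ∘ A) i = (rowSet A i).image f := by
    simp only [rowSet, image_image, Function.comp_def]
  have hcol : colSet (f ∘ A) j = (colSet A j).image f := by
    simp only [colSet, image_image, Function.comp_def]
  rw [hrow, hcol, ← image_inter _ _ hf, card_image_of_injective _ hf]

end Relabel

section ShiftDesign

variable {G β : Type*} [AddGroup G] (b : G → β)

def shiftDesign (p : G × G) : β × G := (b p.2, p.1 + p.2)

theorem isBinary_shiftDesign : IsBinary (shiftDesign b) :=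
  ⟨fun _ _ _ h => add_left_cancel (Prod.ext_iff.1 h).2,
    fun _ _ _ h => add_right_cancel (Prod.ext_iff.1 h).2⟩

variable [Fintype G] [DecidableEq G] [DecidableEq β]

theorem colSet_shiftDesign (j : G) : colSet (shiftDesign b) j = {b j} ×ˢ univ := by
  ext ⟨y, g⟩
  simp only [colSet, shiftDesign, mem_image, mem_univ, true_and, mem_product, mem_singleton,
    Prod.mk.injEq, and_true]
  exact ⟨fun ⟨_, hy, _⟩ => hy.symm, fun hy => ⟨g - j, hy.symm, sub_add_cancel g j⟩⟩

theorem card_filter_shiftDesign_eq (x : β × G) :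
    #{p | shiftDesign b p = x} = #{j | b j = x.1} := by
  refine card_nbij' Prod.snd (fun j => (x.2 - j, j)) ?_ ?_ ?_ ?_ <;>
    simp +contextual [shiftDesign, Set.MapsTo, Set.LeftInvOn, Prod.ext_iff, sub_eq_iff_eq_add]

theorem isEquireplicate_shiftDesign {e : ℕ} (hb : ∀ y, #{j | b j = y} = e) :
    IsEquireplicate (shiftDesign b) e := fun x => by
  rw [card_filter_shiftDesign_eq, hb]

theorem rowSet_inter_colSet_shiftDesign (i j : G) :
    rowSet (shiftDesign b) i ∩ colSet (shiftDesign b) j =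
      ({j' | b j' = b j} : Finset G).image fun j' => shiftDesign b (i, j') := by
  ext x
  simp only [rowSet, colSet_shiftDesign, shiftDesign, mem_inter, mem_image, mem_univ, true_and,
    mem_product, mem_singleton, mem_filter]
  constructor
  · rintro ⟨⟨j', rfl⟩, hj', -⟩
    exact ⟨j', hj', rfl⟩
  · rintro ⟨j', hj', rfl⟩
    exact ⟨⟨j', rfl⟩, hj', trivial⟩

theorem card_rowSet_inter_colSet_shiftDesign (i j : G) :
    #(rowSet (shiftDesign b) i ∩ colSet (shiftDesign b) j) = #{j' | b j' = b j} := by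
  rw [rowSet_inter_colSet_shiftDesign, card_image_of_injective _ ((isBinary_shiftDesign b).1 i)]

end ShiftDesign

theorem card_filter_decide_val_lt_eq (k : ℕ) (y : Bool) :
    #{j : Fin (2 * k) | decide ((j : ℕ) < k) = y} = k := by
  have hlt : #{j : Fin (2 * k) | (j : ℕ) < k} = k := by
    rw [Fin.card_filter_val_lt]; omega
  cases y
  · have hsplit :=
      card_filter_add_card_filter_not (s := univ) (p := fun j : Fin (2 * k) => (j : ℕ) < k)
    simp only [decide_eq_false_iff_not]
    rw [card_univ, Fintype.card_fin, hlt] at hsplit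
    omega
  · simpa only [decide_eq_true_eq] using hlt

/-- For every positive integer k there exists a binary, equireplicate
2k×2k row-column design on 4k symbols with replication number k, all of whose
row-column intersections have size k; that is, a (4k, k, −, −, k : 2k × 2k) AO-array
exists. -/
theorem stmt9 (k : ℕ) (hk : 0 < k) :
    ∃ A : Fin (2 * k) × Fin (2 * k) → Fin (4 * k),
      IsBinary A ∧ IsEquireplicate A k ∧
      ∀ i j : Fin (2 * k), (rowSet A i ∩ colSet A j).card = k := by
  have : NeZero (2 * k) := ⟨by omega⟩
  let b : Fin (2 * k) → Bool := fun j => decide ((j : ℕ) < k)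
  let f : Bool × Fin (2 * k) ≃ Fin (4 * k) := Fintype.equivFinOfCardEq (by
    simp only [Fintype.card_prod, Fintype.card_bool, Fintype.card_fin]; ring)
  refine ⟨f ∘ shiftDesign b, (isBinary_shiftDesign b).comp f.injective,
    (isEquireplicate_shiftDesign b (card_filter_decide_val_lt_eq k)).comp_equiv f, fun i j => ?_⟩
  rw [card_rowSet_inter_colSet_comp _ f.injective, card_rowSet_inter_colSet_shiftDesign,
    card_filter_decide_val_lt_eq]
end

section
/- For an integer i ≥ 2, let s = 2i − 1 (the i-th odd number) and let t be the i-th even triangular number, namely t = i·(2i − 1) if i is even and t = (i − 1)·(2i − 1) if i is odd. Then s divides t, so e := t²/s² is a positive integer (equal to i² if i is even and (i−1)² if i is odd); moreover (s² − 1) divides 2·e·(t − 1), and in fact 4·e·(t − 1) = (s² − 1)·i·(2i + 1) when i is even and 4·e·(t − 1) = (s² − 1)·(i − 1)·(2i − 3) when i is odd. Consequently (v, r) = (s², t) is an admissible parameter set for a t×t binary pseudo Youden design on s² symbols. -/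
lemma key10 (c s : ℕ) (hs : 0 < s) : (c * s) ^ 2 / s ^ 2 = c ^ 2 := by
  rw [mul_pow, Nat.mul_div_cancel _ (pow_pos hs 2)]

/-- For i ≥ 2, let s = 2i − 1 be the i-th odd number and t the i-th even
triangular number (t = i·(2i−1) for even i and t = (i−1)·(2i−1) for odd i). Then s ∣ t,
the replication number e = t²/s² is a positive integer, equal to i² for even i and to
(i−1)² for odd i; moreover (s² − 1) divides 2·e·(t − 1), with
4·e·(t−1) = (s²−1)·i·(2i+1) for even i and 4·e·(t−1) = (s²−1)·(i−1)·(2i−3) for odd i,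
and the pair replication number λ = 2·e·(t−1)/(s²−1) is a positive integer.
Consequently (v, r) = (s², t) is an admissible parameter set for an r×r binary pseudo
Youden design. -/
theorem stmt10 (i s t : ℕ) (hi : 2 ≤ i)
    (hs : s = 2 * i - 1)
    (ht : t = if Even i then i * (2 * i - 1) else (i - 1) * (2 * i - 1)) :
    s ∣ t ∧
    0 < t ^ 2 / s ^ 2 ∧
    t ^ 2 / s ^ 2 = (if Even i then i ^ 2 else (i - 1) ^ 2) ∧
    (s ^ 2 - 1) ∣ 2 * (t ^ 2 / s ^ 2) * (t - 1) ∧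
    (Even i → 4 * (t ^ 2 / s ^ 2) * (t - 1) = (s ^ 2 - 1) * (i * (2 * i + 1))) ∧
    (¬ Even i → 4 * (t ^ 2 / s ^ 2) * (t - 1) = (s ^ 2 - 1) * ((i - 1) * (2 * i - 3))) ∧
    0 < 2 * (t ^ 2 / s ^ 2) * (t - 1) / (s ^ 2 - 1) := by
  rcases Nat.even_or_odd i with he | ho
  · obtain ⟨m, hm⟩ := he
    obtain ⟨n, hmn⟩ : ∃ n, m = n + 1 := ⟨m - 1, by omega⟩
    have hi' : i = 2 * n + 2 := by omega
    rw [if_pos ⟨m, hm⟩] at ht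
    have hsv : s = 4 * n + 3 := by omega
    have htval : t = 8 * n ^ 2 + 14 * n + 6 := by
      rw [ht, hi', show 2 * (2 * n + 2) - 1 = 4 * n + 3 from by omega]; ring
    have htv : t = (2 * m) * s := by rw [htval, hsv, hmn]; ring
    have hspos : 0 < s := by omega
    have hdiv : t ^ 2 / s ^ 2 = (2 * m) ^ 2 := by rw [htv, key10 _ _ hspos]
    have ht1 : t - 1 = 8 * n ^ 2 + 14 * n + 5 := by omega
    have hs2 : s ^ 2 = 16 * n ^ 2 + 24 * n + 9 := by rw [hsv]; ring
    have hs2' : s ^ 2 - 1 = 16 * n ^ 2 + 24 * n + 8 := by omega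
    have hkey : 2 * (t ^ 2 / s ^ 2) * (t - 1) = (s ^ 2 - 1) * (m * (4 * m + 1)) := by
      rw [hdiv, ht1, hs2', hmn]; ring
    refine ⟨⟨2 * m, by rw [htv, mul_comm]⟩, by rw [hdiv, hmn]; positivity,
      by rw [if_pos ⟨m, hm⟩, hdiv]; congr 1; omega,
      ⟨m * (4 * m + 1), hkey⟩, fun _ => ?_, fun h => absurd ⟨m, hm⟩ h, ?_⟩
    · rw [hdiv, ht1, hs2', hmn, hi']; ring
    · rw [hkey, Nat.mul_div_cancel_left _ (by omega : 0 < s ^ 2 - 1)]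
      exact Nat.mul_pos (by omega) (by omega)
  · obtain ⟨m, hm⟩ := ho
    have hne : ¬ Even i := by simp [hm, Nat.even_add_one, parity_simps]
    obtain ⟨n, hmn⟩ : ∃ n, m = n + 1 := ⟨m - 1, by omega⟩
    have hi' : i = 2 * n + 3 := by omega
    rw [if_neg hne] at ht
    have hsv : s = 4 * n + 5 := by omega
    have htval : t = 8 * n ^ 2 + 18 * n + 10 := by
      rw [ht, hi', show 2 * n + 3 - 1 = 2 * n + 2 from by omega,
        show 2 * (2 * n + 3) - 1 = 4 * n + 5 from by omega]; ring
    have htv : t = (2 * m) * s := by rw [htval, hsv, hmn]; ring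
    have hspos : 0 < s := by omega
    have hdiv : t ^ 2 / s ^ 2 = (2 * m) ^ 2 := by rw [htv, key10 _ _ hspos]
    have ht1 : t - 1 = 8 * n ^ 2 + 18 * n + 9 := by omega
    have hs2 : s ^ 2 = 16 * n ^ 2 + 40 * n + 25 := by rw [hsv]; ring
    have hs2' : s ^ 2 - 1 = 16 * n ^ 2 + 40 * n + 24 := by omega
    have hw : m * (4 * m - 1) = (n + 1) * (4 * n + 3) := by
      rw [show 4 * m - 1 = 4 * n + 3 from by omega, hmn]
    have hkey : 2 * (t ^ 2 / s ^ 2) * (t - 1) = (s ^ 2 - 1) * (m * (4 * m - 1)) := by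
      rw [hdiv, ht1, hs2', hw, hmn]; ring
    refine ⟨⟨2 * m, by rw [htv, mul_comm]⟩, by rw [hdiv, hmn]; positivity,
      by rw [if_neg hne, hdiv]; congr 1; omega,
      ⟨m * (4 * m - 1), hkey⟩, fun h => absurd h hne, fun _ => ?_, ?_⟩
    · rw [hdiv, ht1, hs2', hi', show 2 * n + 3 - 1 = 2 * n + 2 from by omega,
        show 2 * (2 * n + 3) - 3 = 4 * n + 3 from by omega, hmn]; ring
    · rw [hkey, Nat.mul_div_cancel_left _ (by omega : 0 < s ^ 2 - 1)]
      rw [hw]; exact Nat.mul_pos (by omega) (by omega)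
end
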